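/- For fixed r ∈ ℝ, t ∈ [0,1), the function v_r(t,·) is C¹ at the boundary point z = r + β√(1-t): the left derivative of z ↦ r + √(2π(1-t))(1-β²)exp((z-r)²/(2(1-t)))Φ((z-r)/√(1-t)) at z = r + β√(1-t) equals 1 (smooth fit). -/

import Mathlib

/-!
In the variable `w = (z - r) / √(1 - t)` the function is `r + √(2π) √(1 - t) (1 - β²) G(w)` with
`G(w) = exp (w²/2) Φ(w)`. Since `Φ'(w) = exp (-w²/2) / √(2π)` cancels the exponential,
`G'(w) = w G(w) + 1/√(2π)`, so the derivative at `w = β` is `β · √(2π)(1 - β²) exp (β²/2) Φ(β) + 1 - β²`,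
which the equation defining `β` turns into `β² + 1 - β² = 1`.
-/

open Real Set MeasureTheory

/-- The standard normal cumulative distribution function. -/
noncomputable def Phi (x : ℝ) : ℝ :=
  (Real.sqrt (2 * Real.pi))⁻¹ * ∫ u in Set.Iic x, Real.exp (-u ^ 2 / 2)

theorem hasDerivAt_integral_Iic {f : ℝ → ℝ} (hf : Integrable f) {x : ℝ} (hx : ContinuousAt f x) :
    HasDerivAt (fun y => ∫ u in Iic y, f u) (f x) x := by
  have hsplit : (fun y => ∫ u in Iic y, f u) =
      fun y => (∫ u in Iic 0, f u) + ∫ u in (0 : ℝ)..y, f u := by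
    ext y
    rw [← intervalIntegral.integral_Iic_sub_Iic hf.integrableOn hf.integrableOn]
    ring
  rw [hsplit]
  exact (intervalIntegral.integral_hasDerivAt_right hf.intervalIntegrable
    hf.aestronglyMeasurable.stronglyMeasurableAtFilter hx).const_add _

theorem hasDerivAt_Phi (x : ℝ) :
    HasDerivAt Phi ((√(2 * π))⁻¹ * exp (-x ^ 2 / 2)) x := by
  have hint : Integrable fun u : ℝ => exp (-u ^ 2 / 2) := by
    simpa [neg_div, div_eq_inv_mul] using integrable_exp_neg_mul_sq (by norm_num : (0 : ℝ) < 2⁻¹)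
  exact (hasDerivAt_integral_Iic hint (by fun_prop)).const_mul _

theorem hasDerivAt_exp_half_sq_mul_Phi (x : ℝ) :
    HasDerivAt (fun x => exp (x ^ 2 / 2) * Phi x)
      (x * exp (x ^ 2 / 2) * Phi x + (√(2 * π))⁻¹) x := by
  have hexp : HasDerivAt (fun x => exp (x ^ 2 / 2)) (exp (x ^ 2 / 2) * x) x := by
    simpa using ((hasDerivAt_pow 2 x).div_const 2).exp
  have hcancel : exp (x ^ 2 / 2) * exp (-x ^ 2 / 2) = 1 := by
    rw [← exp_add, ← add_div, add_neg_cancel, zero_div, exp_zero]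
  refine (hexp.mul (hasDerivAt_Phi x)).congr_deriv ?_
  linear_combination hcancel * (√(2 * π))⁻¹

theorem stmt17_general (β r t : ℝ)
    (hroot : Real.sqrt (2 * Real.pi) * (1 - β ^ 2) * Real.exp (β ^ 2 / 2) * Phi β = β)
    (ht : t ∈ Set.Ico (0 : ℝ) 1) :
    HasDerivWithinAt
      (fun z => r + Real.sqrt (2 * Real.pi * (1 - t)) * (1 - β ^ 2) *
        Real.exp ((z - r) ^ 2 / (2 * (1 - t))) * Phi ((z - r) / Real.sqrt (1 - t)))
      1 (Set.Iic (r + β * Real.sqrt (1 - t))) (r + β * Real.sqrt (1 - t)) := by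
  have ht1 : 0 < 1 - t := by linarith [ht.2]
  set σ := √(1 - t)
  have hσ : 0 < σ := sqrt_pos.mpr ht1
  have hσsq : σ ^ 2 = 1 - t := sq_sqrt ht1.le
  have hform : (fun z => r + √(2 * π * (1 - t)) * (1 - β ^ 2) *
      exp ((z - r) ^ 2 / (2 * (1 - t))) * Phi ((z - r) / σ)) =
      fun z => r + √(2 * π) * σ * (1 - β ^ 2) *
        (exp (((z - r) / σ) ^ 2 / 2) * Phi ((z - r) / σ)) := by
    ext z
    rw [sqrt_mul (by positivity), div_pow, hσsq, div_div, mul_comm (1 - t) 2]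
    ring
  have hw : HasDerivAt (fun z => (z - r) / σ) (1 / σ) (r + β * σ) :=
    ((hasDerivAt_id _).sub_const r).div_const σ
  have hβw : (r + β * σ - r) / σ = β := by field_simp; ring
  rw [hform]
  refine ((((hasDerivAt_exp_half_sq_mul_Phi β).comp_of_eq _ hw hβw.symm).const_mul
    (√(2 * π) * σ * (1 - β ^ 2))).const_add r).hasDerivWithinAt.congr_deriv ?_
  have hπ : √(2 * π) ≠ 0 := by positivity
  field_simp
  linear_combination β * hroot

theorem stmt17 (β r t : ℝ) (hβ : 0 < β)
    (hroot : Real.sqrt (2 * Real.pi) * (1 - β ^ 2) * Real.exp (β ^ 2 / 2) * Phi β = β)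
    (ht : t ∈ Set.Ico (0 : ℝ) 1) :
    HasDerivWithinAt
      (fun z => r + Real.sqrt (2 * Real.pi * (1 - t)) * (1 - β ^ 2) *
        Real.exp ((z - r) ^ 2 / (2 * (1 - t))) * Phi ((z - r) / Real.sqrt (1 - t)))
      1 (Set.Iic (r + β * Real.sqrt (1 - t))) (r + β * Real.sqrt (1 - t)) :=
  stmt17_general β r t hroot ht
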